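/- arXiv:2302.13246 — 3 statements merged into one kernel-verified Lean document; each statement's English description precedes it below -/
import Mathlib

section
/- Let y₀, …, yₙ ∈ ℝⁿ be affinely independent with Lagrange functions ℓ₀, …, ℓₙ. If the point y_d (for some index d) is replaced by a new point x ∈ ℝⁿ with ℓ_d(x) ≠ 0, then the new set {y₀, …, y_{d−1}, x, y_{d+1}, …, yₙ} is also affinely independent. -/
open Matrix

theorem AffineMap.notMem_affineSpan_of_forall_eq {k V₁ P₁ V₂ P₂ : Type*} [Ring k]
    [AddCommGroup V₁] [Module k V₁] [AddTorsor V₁ P₁]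
    [AddCommGroup V₂] [Module k V₂] [AddTorsor V₂ P₂]
    (f : P₁ →ᵃ[k] P₂) {s : Set P₁} {q : P₂} (hs : ∀ p ∈ s, f p = q) {x : P₁} (hx : f x ≠ q) :
    x ∉ affineSpan k s := fun hxs =>
  hx (AffineMap.eqOn_affineSpan (g := AffineMap.const k P₁ q) hs hxs)

def Matrix.dotProductAffineMap {R m : Type*} [CommRing R] [Fintype m] (c : R) (a : m → R) :
    (m → R) →ᵃ[R] R :=
  (dotProductBilin R R a).toAffineMap + AffineMap.const R (m → R) c

@[simp]
theorem Matrix.dotProductAffineMap_apply {R m : Type*} [CommRing R] [Fintype m] (c : R)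
    (a z : m → R) : dotProductAffineMap c a z = c + a ⬝ᵥ z :=
  add_comm _ _

/-- Replacing the point `y d` by a new point `x` with nonzero Lagrange
function value `ℓ_d(x)` preserves affine independence. -/
theorem update_preserves_affineIndependent (n : ℕ) (y : Fin (n + 1) → (Fin n → ℝ))
    (hy : AffineIndependent ℝ y)
    (ℓ : Fin (n + 1) → ℝ × (Fin n → ℝ))
    (hℓ : ∀ i j, (ℓ i).1 + (ℓ i).2 ⬝ᵥ y j = if i = j then 1 else 0)
    (d : Fin (n + 1)) (x : Fin n → ℝ)
    (hx : (ℓ d).1 + (ℓ d).2 ⬝ᵥ x ≠ 0) :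
    AffineIndependent ℝ (Function.update y d x) := by
  have hothers : ∀ j : {j // j ≠ d}, Function.update y d x j = y j := fun j =>
    Function.update_of_ne j.2 x y
  refine AffineIndependent.affineIndependent_of_notMem_span (i := d) ?_ ?_
  · simp only [hothers]
    exact hy.comp_embedding (.subtype _)
  · rw [Function.update_self]
    -- `ℓ_d` vanishes at every `y j` with `j ≠ d`, hence on their affine span, but not at `x`.
    refine (dotProductAffineMap (ℓ d).1 (ℓ d).2).notMem_affineSpan_of_forall_eq ?_
      (by simpa using hx)
    rintro - ⟨j, hj, rfl⟩
    simpa [Function.update_of_ne hj, Ne.symm hj] using hℓ d j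
end

section
/- Let y₀, …, yₙ ∈ ℝⁿ be affinely independent with Lagrange functions ℓ₀, …, ℓₙ, and replace y_d by x with τ := ℓ_d(x) ≠ 0. Then the Lagrange functions of the new interpolation set are given by ℓ̂_d = ℓ_d / τ and ℓ̂_i = ℓ_i − (ℓ_i(x)/τ) ℓ_d for i ≠ d. -/
/-!
Both sides are affine functions, so it suffices that they agree at the new points. The right-hand
sides take the values `δᵢⱼ` there, since `ℓ_d` vanishes at `y_j` for `j ≠ d` and equals `τ` at `x`.
Lagrange functions are unique: their existence forces the `n + 1` points to be affinely
independent, hence to span `ℝⁿ`.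
-/

variable {k V P ι : Type*}

section Ring

variable [Ring k] [AddCommGroup V] [Module k V] [AddTorsor V P] [DecidableEq ι]

def IsLagrangeBasis (p : ι → P) (L : ι → P →ᵃ[k] k) : Prop :=
  ∀ i j, L i (p j) = if i = j then 1 else 0

theorem IsLagrangeBasis.affineIndependent [Fintype ι] {p : ι → P} {L : ι → P →ᵃ[k] k}
    (hL : IsLagrangeBasis p L) : AffineIndependent k p := by
  rw [affineIndependent_iff_eq_of_fintype_affineCombination_eq]
  intro w₁ w₂ hw₁ hw₂ hw
  have apply_affineCombination : ∀ w : ι → k, ∑ j, w j = 1 → ∀ i,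
      L i (Finset.univ.affineCombination k p w) = w i := by
    intro w hw i
    rw [Finset.map_affineCombination _ _ _ hw,
      Finset.affineCombination_eq_linear_combination _ _ _ hw]
    simp [hL i]
  funext i
  rw [← apply_affineCombination w₁ hw₁ i, ← apply_affineCombination w₂ hw₂ i, hw]

theorem IsLagrangeBasis.unique {p : ι → P} {L M : ι → P →ᵃ[k] k}
    (hspan : affineSpan k (Set.range p) = ⊤) (hL : IsLagrangeBasis p L)
    (hM : IsLagrangeBasis p M) : L = M := by
  funext i
  refine AffineMap.ext_on hspan ?_
  rintro - ⟨j, rfl⟩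
  rw [hL i j, hM i j]

end Ring

section Field

variable [Field k] [AddCommGroup V] [Module k V] [AddTorsor V P] [DecidableEq ι]

theorem IsLagrangeBasis.affineSpan_eq_top [FiniteDimensional k V] [Fintype ι] {p : ι → P}
    {L : ι → P →ᵃ[k] k} (hL : IsLagrangeBasis p L)
    (hcard : Fintype.card ι = Module.finrank k V + 1) : affineSpan k (Set.range p) = ⊤ :=
  hL.affineIndependent.affineSpan_eq_top_iff_card_eq_finrank_add_one.mpr hcard

def lagrangeExchange (L : ι → P →ᵃ[k] k) (d : ι) (x : P) (i : ι) : P →ᵃ[k] k :=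
  if i = d then (L d x)⁻¹ • L d else L i - (L i x / L d x) • L d

theorem IsLagrangeBasis.update {p : ι → P} {L : ι → P →ᵃ[k] k} (hL : IsLagrangeBasis p L)
    {d : ι} {x : P} (hx : L d x ≠ 0) :
    IsLagrangeBasis (Function.update p d x) (lagrangeExchange L d x) := by
  intro i j
  rcases eq_or_ne j d with rfl | hj
  · by_cases hi : i = j <;> simp [lagrangeExchange, hi, hx]
  · by_cases hi : i = d <;> simp [lagrangeExchange, hi, hj, hL _ j, Ne.symm hj]

end Field

def dotProductAffine [CommRing k] [Fintype ι] (a : k × (ι → k)) : (ι → k) →ᵃ[k] k :=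
  (dotProductBilin k k a.2).toAffineMap + AffineMap.const k (ι → k) a.1

@[simp]
theorem dotProductAffine_apply [CommRing k] [Fintype ι] (a : k × (ι → k)) (z : ι → k) :
    dotProductAffine a z = a.1 + a.2 ⬝ᵥ z :=
  add_comm _ _

theorem lagrange_update_general (n : ℕ) (y : Fin (n + 1) → (Fin n → ℝ))
    (ℓ : Fin (n + 1) → ℝ × (Fin n → ℝ))
    (hℓ : ∀ i j, (ℓ i).1 + (ℓ i).2 ⬝ᵥ y j = if i = j then 1 else 0)
    (d : Fin (n + 1)) (x : Fin n → ℝ)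
    (τ : ℝ) (hτdef : τ = (ℓ d).1 + (ℓ d).2 ⬝ᵥ x) (hτ : τ ≠ 0)
    (ℓ' : Fin (n + 1) → ℝ × (Fin n → ℝ))
    (hℓ' : ∀ i j, (ℓ' i).1 + (ℓ' i).2 ⬝ᵥ Function.update y d x j =
      if i = j then 1 else 0) :
    ∀ z : Fin n → ℝ,
      ((ℓ' d).1 + (ℓ' d).2 ⬝ᵥ z = ((ℓ d).1 + (ℓ d).2 ⬝ᵥ z) / τ) ∧
      ∀ i, i ≠ d →
        (ℓ' i).1 + (ℓ' i).2 ⬝ᵥ z =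
          ((ℓ i).1 + (ℓ i).2 ⬝ᵥ z) -
            (((ℓ i).1 + (ℓ i).2 ⬝ᵥ x) / τ) * ((ℓ d).1 + (ℓ d).2 ⬝ᵥ z) := by
  have hL : IsLagrangeBasis y (dotProductAffine ∘ ℓ) := fun i j => by simpa using hℓ i j
  have hL' : IsLagrangeBasis (Function.update y d x) (dotProductAffine ∘ ℓ') :=
    fun i j => by simpa using hℓ' i j
  have hx : dotProductAffine (ℓ d) x ≠ 0 := by simpa [← hτdef] using hτ
  have hspan := hL'.affineSpan_eq_top (by simp)
  have heq := hL'.unique hspan (hL.update hx)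
  intro z
  refine ⟨?_, fun i hi => ?_⟩
  · simpa [lagrangeExchange, ← hτdef, inv_mul_eq_div] using congr($heq d z)
  · simpa [lagrangeExchange, hi, ← hτdef] using congr($heq i z)

/-- Rank-one update of the Lagrange functions when one interpolation
point is exchanged. Affine functions are represented by pairs `(c, g)`
with value `c + gᵀ x`. -/
theorem lagrange_update (n : ℕ) (y : Fin (n + 1) → (Fin n → ℝ))
    (hy : AffineIndependent ℝ y)
    (ℓ : Fin (n + 1) → ℝ × (Fin n → ℝ))
    (hℓ : ∀ i j, (ℓ i).1 + (ℓ i).2 ⬝ᵥ y j = if i = j then 1 else 0)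
    (d : Fin (n + 1)) (x : Fin n → ℝ)
    (τ : ℝ) (hτdef : τ = (ℓ d).1 + (ℓ d).2 ⬝ᵥ x) (hτ : τ ≠ 0)
    (ℓ' : Fin (n + 1) → ℝ × (Fin n → ℝ))
    (hℓ' : ∀ i j, (ℓ' i).1 + (ℓ' i).2 ⬝ᵥ Function.update y d x j =
      if i = j then 1 else 0) :
    ∀ z : Fin n → ℝ,
      ((ℓ' d).1 + (ℓ' d).2 ⬝ᵥ z = ((ℓ d).1 + (ℓ d).2 ⬝ᵥ z) / τ) ∧
      ∀ i, i ≠ d →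
        (ℓ' i).1 + (ℓ' i).2 ⬝ᵥ z =
          ((ℓ i).1 + (ℓ i).2 ⬝ᵥ z) -
            (((ℓ i).1 + (ℓ i).2 ⬝ᵥ x) / τ) * ((ℓ d).1 + (ℓ d).2 ⬝ᵥ z) :=
  lagrange_update_general n y ℓ hℓ d x τ hτdef hτ ℓ' hℓ'
end

section
/- Let m(x) = c + gᵀ(x − x̄) + (1/2)(x − x̄)ᵀH(x − x̄) be a quadratic with symmetric H, and Δ > 0. A point x* with ‖x* − x̄‖ ≤ Δ is a global minimizer of m over the ball {x : ‖x − x̄‖ ≤ Δ} if and only if there exists λ ≥ 0 such that (H + λI)(x* − x̄) = −g, H + λI is positive semidefinite, and λ(Δ − ‖x* − x̄‖) = 0. -/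
open Matrix
open scoped RealInnerProductSpace

open Filter Metric Topology

/-!
Let `r = A s + g` be the gradient of the model `q` at `s`. Minimality over the convex ball gives
`⟪r, d - s⟫ ≥ 0` for every `d` in the ball; testing this against `d = -(Δ / ‖r‖) • r` and using
Cauchy–Schwarz forces `r = -μ • s` with `μ ≥ 0`, and `μ = 0` unless `‖s‖ = Δ`. With `B = A + μ I`,
`q d - q s = ⟪d - s, B (d - s)⟫ / 2 + μ (‖s‖² - ‖d‖²) / 2`,
which gives sufficiency at once. For necessity of `B ⪰ 0`, the second term vanishes on the sphere
of radius `‖s‖` (on the whole ball if `s = 0`). Every direction `v` with `⟪s, v⟫ ≠ 0` is a nonzero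
multiple of `d - s` for some `d` on that sphere, and the directions tangent to it are limits of
such `v`.
-/

theorem nonneg_of_forall_mul_add_mul_sq_nonneg {a b : ℝ}
    (h : ∀ t : ℝ, 0 < t → t ≤ 1 → 0 ≤ a * t + b * t ^ 2) : 0 ≤ a := by
  have hlim : Tendsto (fun t => a + b * t) (𝓝[>] 0) (𝓝 a) := by
    refine Tendsto.mono_left ?_ nhdsWithin_le_nhds
    exact (by fun_prop : Continuous fun t : ℝ => a + b * t).tendsto' 0 a (by simp)
  refine ge_of_tendsto hlim (mem_of_superset (Ioo_mem_nhdsGT one_pos) fun t ht => ?_)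
  refine nonneg_of_mul_nonneg_right ?_ ht.1
  nlinarith [h t ht.1 ht.2.le]

section InnerProductSpace

variable {E : Type*} [NormedAddCommGroup E] [InnerProductSpace ℝ E]

theorem exists_eq_neg_smul_of_forall_inner_sub_nonneg {r s : E} {Δ : ℝ} (hΔ : 0 < Δ)
    (hs : ‖s‖ ≤ Δ) (h : ∀ d : E, ‖d‖ ≤ Δ → 0 ≤ ⟪r, d - s⟫) :
    ∃ μ : ℝ, 0 ≤ μ ∧ r = -(μ • s) ∧ μ * (Δ - ‖s‖) = 0 := by
  rcases eq_or_ne r 0 with rfl | hr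
  · exact ⟨0, le_rfl, by simp, zero_mul _⟩
  have hr' : 0 < ‖r‖ := norm_pos_iff.2 hr
  have hfar := h (-(Δ / ‖r‖) • r) (by
    rw [norm_smul, norm_neg, norm_div, norm_norm, Real.norm_of_nonneg hΔ.le,
      div_mul_cancel₀ _ hr'.ne'])
  rw [inner_sub_right, inner_smul_right, real_inner_self_eq_norm_sq] at hfar
  have hcs := real_inner_le_norm (-r) s
  rw [inner_neg_left, norm_neg] at hcs
  have hsΔ : ‖s‖ = Δ := by
    refine le_antisymm hs (le_of_mul_le_mul_left ?_ hr')
    field_simp at hfar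
    nlinarith
  have hpar : ⟪-r, s⟫ = ‖-r‖ * ‖s‖ := by
    rw [inner_neg_left, norm_neg]
    field_simp at hfar
    nlinarith
  have hs0 : 0 < ‖s‖ := hsΔ ▸ hΔ
  rw [inner_eq_norm_mul_iff_real, norm_neg] at hpar
  refine ⟨‖r‖ / ‖s‖, by positivity, ?_, by rw [hsΔ, sub_self, mul_zero]⟩
  rw [← neg_eq_iff_eq_neg, ← smul_right_inj hs0.ne', hpar, smul_smul,
    mul_div_cancel₀ _ hs0.ne']

theorem inner_map_self_nonneg_of_forall_norm_le {B : E →ₗ[ℝ] E} {ρ : ℝ} (hρ : 0 < ρ)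
    (h : ∀ u : E, ‖u‖ ≤ ρ → 0 ≤ ⟪u, B u⟫) (v : E) : 0 ≤ ⟪v, B v⟫ := by
  rcases eq_or_ne v 0 with rfl | hv
  · simp
  have hv' : 0 < ‖v‖ := norm_pos_iff.2 hv
  have hscaled := h ((ρ / ‖v‖) • v) (by
    rw [norm_smul, Real.norm_of_nonneg (by positivity), div_mul_cancel₀ _ hv'.ne'])
  rw [map_smul, inner_smul_left, inner_smul_right, RCLike.conj_to_real, ← mul_assoc] at hscaled
  exact nonneg_of_mul_nonneg_right hscaled (by positivity)

theorem inner_map_self_nonneg_of_forall_norm_eq {B : E →ₗ[ℝ] E} {s : E} (hs : s ≠ 0)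
    (h : ∀ d : E, ‖d‖ = ‖s‖ → 0 ≤ ⟪d - s, B (d - s)⟫) (v : E) : 0 ≤ ⟪v, B v⟫ := by
  -- The line through `s` in a direction `v` not tangent to the sphere meets it a second time.
  have transversal : ∀ v : E, ⟪s, v⟫ ≠ 0 → 0 ≤ ⟪v, B v⟫ := by
    intro v hsv
    have hv : v ≠ 0 := by rintro rfl; simp at hsv
    have hv' : 0 < ‖v‖ ^ 2 := by positivity
    set t := -2 * ⟪s, v⟫ / ‖v‖ ^ 2
    have htv : t * ‖v‖ ^ 2 = -2 * ⟪s, v⟫ := div_mul_cancel₀ _ hv'.ne'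
    have ht0 : t ≠ 0 := div_ne_zero (by simpa using hsv) hv'.ne'
    have hsec := h (s + t • v) (by
      refine (sq_eq_sq₀ (norm_nonneg _) (norm_nonneg _)).1 ?_
      rw [norm_add_sq_real, inner_smul_right, norm_smul, mul_pow, Real.norm_eq_abs, sq_abs]
      linear_combination t * htv)
    rw [add_sub_cancel_left, map_smul, inner_smul_left, inner_smul_right, RCLike.conj_to_real,
      ← mul_assoc] at hsec
    exact nonneg_of_mul_nonneg_right hsec (mul_self_pos.2 ht0)
  rcases ne_or_eq ⟪s, v⟫ 0 with hsv | hsv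
  · exact transversal v hsv
  have hlim : Tendsto (fun ε : ℝ => ⟪v + ε • s, B v + ε • B s⟫) (𝓝[>] 0) (𝓝 ⟪v, B v⟫) := by
    refine Tendsto.mono_left ?_ nhdsWithin_le_nhds
    exact (by fun_prop : Continuous fun ε : ℝ => ⟪v + ε • s, B v + ε • B s⟫).tendsto' 0 _
      (by simp)
  refine ge_of_tendsto hlim (eventually_nhdsWithin_of_forall fun ε (hε : 0 < ε) => ?_)
  rw [← map_smul, ← map_add]
  refine transversal _ ?_
  rw [inner_add_right, hsv, inner_smul_right, real_inner_self_eq_norm_sq, zero_add]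
  have := norm_pos_iff.2 hs
  positivity

variable {A : E →ₗ[ℝ] E} {g s : E}

noncomputable def quadraticModel (A : E →ₗ[ℝ] E) (g d : E) : ℝ := ⟪g, d⟫ + ⟪d, A d⟫ / 2

theorem quadraticModel_add (hA : A.IsSymmetric) (s u : E) :
    quadraticModel A g (s + u) = quadraticModel A g s + ⟪A s + g, u⟫ + ⟪u, A u⟫ / 2 := by
  simp only [quadraticModel, map_add, inner_add_left, inner_add_right]
  rw [real_inner_comm (A s) u, ← hA s u]
  ring

theorem inner_sub_nonneg_of_isMinOn (hA : A.IsSymmetric) {S : Set E} (hS : Convex ℝ S)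
    (hsS : s ∈ S) (hmin : IsMinOn (quadraticModel A g) S s) {d : E} (hd : d ∈ S) :
    0 ≤ ⟪A s + g, d - s⟫ := by
  refine nonneg_of_forall_mul_add_mul_sq_nonneg (b := ⟪d - s, A (d - s)⟫ / 2) fun t ht0 ht1 => ?_
  have hle := isMinOn_iff.1 hmin _ (hS.add_smul_sub_mem hsS hd ⟨ht0.le, ht1⟩)
  rw [quadraticModel_add hA, map_smul, inner_smul_left, inner_smul_right,
    inner_smul_right, RCLike.conj_to_real] at hle
  linarith

theorem quadraticModel_sub_quadraticModel (hA : A.IsSymmetric) {μ : ℝ}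
    (hs : (A + μ • 1) s = -g) (d : E) :
    quadraticModel A g d - quadraticModel A g s =
      ⟪d - s, (A + μ • 1) (d - s)⟫ / 2 + μ * (‖s‖ ^ 2 - ‖d‖ ^ 2) / 2 := by
  have hr : A s + g = -(μ • s) := by
    have hs' : A s + μ • s = -g := by simpa using hs
    rw [eq_neg_iff_add_eq_zero, add_right_comm, hs', neg_add_cancel]
  have hd := quadraticModel_add (g := g) hA s (d - s)
  rw [add_sub_cancel, hr] at hd
  have hnorm := norm_add_sq_real s (d - s)
  rw [add_sub_cancel] at hnorm
  rw [hd, LinearMap.add_apply, LinearMap.smul_apply, Module.End.one_apply, inner_add_right,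
    inner_neg_left, inner_smul_left, inner_smul_right, real_inner_self_eq_norm_sq,
    RCLike.conj_to_real, hnorm]
  ring

theorem isMinOn_quadraticModel_closedBall_iff (hA : A.IsSymmetric) {Δ : ℝ} (hΔ : 0 < Δ)
    (hs : ‖s‖ ≤ Δ) :
    IsMinOn (quadraticModel A g) (closedBall 0 Δ) s ↔
      ∃ μ : ℝ, 0 ≤ μ ∧ (A + μ • 1) s = -g ∧ (A + μ • 1).IsPositive ∧ μ * (Δ - ‖s‖) = 0 := by
  have hsym : ∀ μ : ℝ, (A + μ • 1).IsSymmetric := fun μ =>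
    hA.add (LinearMap.IsSymmetric.id.smul RCLike.conj_to_real)
  constructor
  · intro hmin
    obtain ⟨μ, hμ, hr, hcompl⟩ := exists_eq_neg_smul_of_forall_inner_sub_nonneg hΔ hs
      fun d hd => inner_sub_nonneg_of_isMinOn hA (convex_closedBall 0 Δ)
        (mem_closedBall_zero_iff.2 hs) hmin (mem_closedBall_zero_iff.2 hd)
    have hsol : (A + μ • 1) s = -g := by
      rw [LinearMap.add_apply, LinearMap.smul_apply, Module.End.one_apply]
      refine eq_neg_of_add_eq_zero_left ?_
      rw [add_right_comm, hr, neg_add_cancel]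
    have hgap : ∀ d : E, ‖d‖ ≤ Δ →
        0 ≤ ⟪d - s, (A + μ • 1) (d - s)⟫ + μ * (‖s‖ ^ 2 - ‖d‖ ^ 2) := fun d hd => by
      have hle := isMinOn_iff.1 hmin d (mem_closedBall_zero_iff.2 hd)
      linarith [quadraticModel_sub_quadraticModel hA hsol d]
    have hquad : ∀ v : E, 0 ≤ ⟪v, (A + μ • 1) v⟫ := by
      rcases eq_or_ne s 0 with rfl | hs0
      · obtain rfl : μ = 0 := by simpa [hΔ.ne'] using hcompl
        refine inner_map_self_nonneg_of_forall_norm_le hΔ fun u hu => ?_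
        simpa using hgap u hu
      · refine inner_map_self_nonneg_of_forall_norm_eq hs0 fun d hd => ?_
        simpa [hd] using hgap d (hd ▸ hs)
    refine ⟨μ, hμ, hsol, (LinearMap.isPositive_iff _).2 ⟨hsym μ, fun v => ?_⟩, hcompl⟩
    rw [real_inner_comm]
    exact hquad v
  · rintro ⟨μ, hμ, hsol, hpos, hcompl⟩
    refine isMinOn_iff.2 fun d hd => sub_nonneg.1 ?_
    rw [quadraticModel_sub_quadraticModel hA hsol]
    have hd' : ‖d‖ ≤ Δ := mem_closedBall_zero_iff.1 hd
    have hshell : 0 ≤ μ * (‖s‖ ^ 2 - ‖d‖ ^ 2) := by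
      rcases mul_eq_zero.1 hcompl with rfl | hsΔ
      · simp
      · exact mul_nonneg hμ (by nlinarith [norm_nonneg d])
    have := hpos.inner_nonneg_right (d - s)
    positivity

end InnerProductSpace

/-- Moré–Sorensen characterization of global solutions of the trust-region
subproblem. -/
theorem more_sorensen (n : ℕ) (c : ℝ) (xb g : EuclideanSpace ℝ (Fin n))
    (H : Matrix (Fin n) (Fin n) ℝ) (hH : Hᵀ = H) (Δ : ℝ) (hΔ : 0 < Δ)
    (m : EuclideanSpace ℝ (Fin n) → ℝ)
    (hm : ∀ x, m x = c + ⟪g, x - xb⟫ +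
      (1 / 2) * ⟪x - xb, Matrix.toEuclideanLin H (x - xb)⟫)
    (xs : EuclideanSpace ℝ (Fin n)) (hxs : ‖xs - xb‖ ≤ Δ) :
    (∀ x, ‖x - xb‖ ≤ Δ → m xs ≤ m x) ↔
      ∃ μ : ℝ, 0 ≤ μ ∧
        Matrix.toEuclideanLin (H + μ • 1) (xs - xb) = -g ∧
        (H + μ • (1 : Matrix (Fin n) (Fin n) ℝ)).PosSemidef ∧
        μ * (Δ - ‖xs - xb‖) = 0 := by
  have hA : (toEuclideanLin H).IsSymmetric := by
    rw [isSymmetric_toEuclideanLin_iff, IsHermitian, conjTranspose_eq_transpose_of_trivial, hH]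
  have hlin : ∀ μ : ℝ, toEuclideanLin (H + μ • 1) = toEuclideanLin H + μ • 1 := fun μ => by
    rw [map_add, map_smul]
    congr
    ext
    simp
  have hmodel : ∀ x, m x = c + quadraticModel (toEuclideanLin H) g (x - xb) := fun x => by
    rw [hm, quadraticModel]
    ring
  have hshift : (∀ x, ‖x - xb‖ ≤ Δ → m xs ≤ m x) ↔
      IsMinOn (quadraticModel (toEuclideanLin H) g) (closedBall 0 Δ) (xs - xb) := by
    simp only [isMinOn_iff, mem_closedBall_zero_iff, hmodel, add_le_add_iff_left]
    exact ⟨fun h d hd => by simpa using h (d + xb) (by simpa using hd), fun h x hx => h _ hx⟩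
  rw [hshift, isMinOn_quadraticModel_closedBall_iff hA hΔ hxs]
  simp only [← isPositive_toEuclideanLin_iff, hlin]
end
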